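/- With notation as in the structure theory of flag-transitive subgroups of a regular incidence complex: for subsets I, J of {-1,0,...,n}, the intersection property ⟨R_i : i ∈ I⟩ ∩ ⟨R_i : i ∈ J⟩ = ⟨R_i : i ∈ I ∩ J⟩ holds, where by convention the subgroup generated by the empty set of indices is taken to be the flag stabilizer R_{-1} = Λ_Φ. -/

import Mathlib

universe u

variable {α : Type u}

/-- A ranked partial order `(α, ≤)` with rank function `rk` is an incidence complex of
rank `n`: ranks run from `-1` to `n` and are strictly monotone, there are unique minimal
and maximal faces, every flag (maximal chain) contains a face of each rank `-1,…,n` (hence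
has exactly `n+2` faces), the complex is strongly flag-connected, and between any two
incident faces of ranks `j-1` and `j+1` there are at least two faces of rank `j`. -/
structure IsIncidenceComplex (n : ℕ) [PartialOrder α] (rk : α → ℤ) : Prop where
  rk_strictMono : ∀ {F G : α}, F < G → rk F < rk G
  rk_range : ∀ F : α, -1 ≤ rk F ∧ rk F ≤ n
  exists_bot : ∃ B : α, rk B = -1 ∧ ∀ F : α, B ≤ F
  exists_top : ∃ T : α, rk T = n ∧ ∀ F : α, F ≤ T
  flag_rk : ∀ Φ : Set α, IsMaxChain (· ≤ ·) Φ → ∀ j : ℤ, -1 ≤ j → j ≤ n →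
    ∃ F ∈ Φ, rk F = j
  strongly_connected : ∀ Φ Ψ : Set α, IsMaxChain (· ≤ ·) Φ → IsMaxChain (· ≤ ·) Ψ →
    Relation.ReflTransGen
      (fun A B => IsMaxChain (· ≤ ·) A ∧ IsMaxChain (· ≤ ·) B ∧ Φ ∩ Ψ ⊆ A ∧ Φ ∩ Ψ ⊆ B ∧
        ∃ F G, F ∈ A ∧ G ∈ B ∧ F ≠ G ∧ A \ {F} = B \ {G}) Φ Ψ
  diamond_ge_two : ∀ F G : α, F < G → rk G = rk F + 2 →
    ∃ H₁ H₂ : α, H₁ ≠ H₂ ∧ F < H₁ ∧ H₁ < G ∧ F < H₂ ∧ H₂ < G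

/-- Two flags are `i`-adjacent when they differ in exactly one face, of rank `i`. -/
def IAdjacent [PartialOrder α] (rk : α → ℤ) (i : ℤ) (Φ Ψ : Set α) : Prop :=
  ∃ F G, F ∈ Φ ∧ G ∈ Ψ ∧ F ≠ G ∧ rk F = i ∧ rk G = i ∧ Φ \ {F} = Ψ \ {G}

/-- The group of order automorphisms of `α`, as a subgroup of the permutations of `α`. -/
def orderAutGroup (α : Type u) [PartialOrder α] : Subgroup (Equiv.Perm α) where
  carrier := {φ | ∀ a b : α, φ a ≤ φ b ↔ a ≤ b}
  one_mem' := fun _ _ => Iff.rfl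
  mul_mem' := by
    intro f g hf hg a b
    rw [Equiv.Perm.mul_apply, Equiv.Perm.mul_apply]
    exact (hf (g a) (g b)).trans (hg a b)
  inv_mem' := by
    intro f hf a b
    conv_rhs => rw [← f.apply_symm_apply a, ← f.apply_symm_apply b]
    exact (hf _ _).symm

/-- `Λ` is a flag-transitive group of automorphisms. -/
def FlagTransitive [PartialOrder α] (Λ : Subgroup (Equiv.Perm α)) : Prop :=
  ∀ Φ Ψ : Set α, IsMaxChain (· ≤ ·) Φ → IsMaxChain (· ≤ ·) Ψ → ∃ γ ∈ Λ, γ '' Φ = Ψ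

/-- The elementwise stabilizer in `Λ` of a set `Ω` of faces. -/
def stabOf [PartialOrder α] (Λ : Subgroup (Equiv.Perm α)) (Ω : Set α) :
    Subgroup (Equiv.Perm α) where
  carrier := {γ | γ ∈ Λ ∧ ∀ x ∈ Ω, γ x = x}
  one_mem' := ⟨Λ.one_mem, fun _ _ => rfl⟩
  mul_mem' := by
    intro f g hf hg
    refine ⟨Λ.mul_mem hf.1 hg.1, fun x hx => ?_⟩
    rw [Equiv.Perm.mul_apply, hg.2 x hx, hf.2 x hx]
  inv_mem' := by
    intro f hf
    refine ⟨Λ.inv_mem hf.1, fun x hx => ?_⟩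
    simpa using (congrArg (⇑f⁻¹) (hf.2 x hx)).symm

/-- The distinguished subgroup `R_i` of `Λ` relative to a base flag enumerated by
`F : Fin n → α`: the elements of `Λ` fixing every base face `F j` with `j ≠ i`.  For
`i ∉ {0,…,n-1}` (e.g. `i = -1` or `i = n`) this is the stabilizer of the base flag. -/
def distinguishedSubgroup [PartialOrder α] {n : ℕ} (Λ : Subgroup (Equiv.Perm α))
    (F : Fin n → α) (i : ℤ) : Subgroup (Equiv.Perm α) :=
  stabOf Λ {x | ∃ j : Fin n, (j : ℤ) ≠ i ∧ x = F j}

/-!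
The subgroup `⟨R i : i ∈ {-1} ∪ I⟩` is exactly the pointwise stabilizer in `Λ` of the base faces
whose rank lies outside `I`; since the stabilizers of two sets meet in the stabilizer of their
union, the intersection property follows.

Only the inclusion "stabilizer ⊆ subgroup" needs work. If `γ` fixes those base faces, strong
flag-connectivity joins `Φ` to `γ Φ` by a sequence of adjacent flags, all containing them. By
induction each flag of the sequence is `δ Φ` with `δ` in the subgroup: pulling the next
adjacency back to `Φ` by `δ⁻¹` and using flag-transitivity gives an element of `R i`, where `i`
is the rank of the face that changes, and `i` cannot be a rank outside `I` of a base face, since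
that face is kept. Finally `δ⁻¹ γ` stabilizes `Φ`, so it lies in `R (-1)`. Throughout, an
automorphism preserves ranks because the rank of a face is determined by the number of faces
below it in any flag through it; hence an automorphism sending a flag `Φ` to a flag `Ψ` fixes
`Φ ∩ Ψ` pointwise.
-/

variable [PartialOrder α]

def orderAutGroup.toOrderIso {γ : Equiv.Perm α} (hγ : γ ∈ orderAutGroup α) : α ≃o α :=
  ⟨γ, fun {a b} => hγ a b⟩

namespace IsIncidenceComplex

variable {n : ℕ} {rk : α → ℤ}

lemma injOn_rk (h : IsIncidenceComplex n rk) {Ψ : Set α} (hΨ : IsChain (· ≤ ·) Ψ) :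
    Set.InjOn rk Ψ := by
  intro x hx y hy hr
  by_contra hne
  rcases hΨ hx hy hne with hle | hle
  · exact (h.rk_strictMono (lt_of_le_of_ne hle hne)).ne hr
  · exact (h.rk_strictMono (lt_of_le_of_ne hle (Ne.symm hne))).ne' hr

lemma rk_image_flag_inter_Iio (h : IsIncidenceComplex n rk) {Ψ : Set α}
    (hΨ : IsMaxChain (· ≤ ·) Ψ) {x : α} (hx : x ∈ Ψ) :
    rk '' (Ψ ∩ Set.Iio x) = Set.Icc (-1) (rk x - 1) := by
  ext k
  constructor
  · rintro ⟨y, ⟨-, hyx⟩, rfl⟩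
    exact ⟨(h.rk_range y).1, Int.le_sub_one_of_lt (h.rk_strictMono hyx)⟩
  · rintro ⟨hk1, hk2⟩
    obtain ⟨y, hyΨ, rfl⟩ := h.flag_rk Ψ hΨ k hk1 (by linarith [(h.rk_range x).2])
    refine ⟨y, ⟨hyΨ, ?_⟩, rfl⟩
    have hne : y ≠ x := by rintro rfl; omega
    rcases hΨ.1 hyΨ hx hne with hle | hle
    · exact lt_of_le_of_ne hle hne
    · exact absurd (h.rk_strictMono (lt_of_le_of_ne hle hne.symm)) (by omega)

lemma ncard_flag_inter_Iio (h : IsIncidenceComplex n rk) {Ψ : Set α}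
    (hΨ : IsMaxChain (· ≤ ·) Ψ) {x : α} (hx : x ∈ Ψ) :
    (Ψ ∩ Set.Iio x).ncard = (rk x + 1).toNat := by
  rw [← ((h.injOn_rk hΨ.1).mono Set.inter_subset_left).ncard_image,
    h.rk_image_flag_inter_Iio hΨ hx, ← Finset.coe_Icc, Set.ncard_coe_finset, Int.card_Icc]
  omega

lemma rk_map (h : IsIncidenceComplex n rk) (e : α ≃o α) (x : α) : rk (e x) = rk x := by
  obtain ⟨Ψ, hΨ, hxΨ⟩ := (Set.subsingleton_singleton (a := x)).isChain.exists_maxChain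
  have hx : x ∈ Ψ := hxΨ rfl
  have hcount := h.ncard_flag_inter_Iio (hΨ.image e) ⟨x, hx, rfl⟩
  rw [← e.image_Iio, ← Set.image_inter e.injective, Set.ncard_image_of_injective _ e.injective,
    h.ncard_flag_inter_Iio hΨ hx] at hcount
  have := (h.rk_range x).1
  have := (h.rk_range (e x)).1
  omega

lemma map_eq_self_of_image_eq (h : IsIncidenceComplex n rk) (e : α ≃o α) {Φ Ψ : Set α}
    (hΨ : IsMaxChain (· ≤ ·) Ψ) (himage : e '' Φ = Ψ) {x : α} (hxΦ : x ∈ Φ) (hxΨ : x ∈ Ψ) :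
    e x = x :=
  h.injOn_rk hΨ.1 (himage ▸ Set.mem_image_of_mem e hxΦ) hxΨ (h.rk_map e x)

end IsIncidenceComplex

section Stabilizers

variable {Λ : Subgroup (Equiv.Perm α)}

lemma mem_stabOf {Ω : Set α} {γ : Equiv.Perm α} :
    γ ∈ stabOf Λ Ω ↔ γ ∈ Λ ∧ ∀ x ∈ Ω, γ x = x :=
  Iff.rfl

lemma stabOf_anti {Ω Ω' : Set α} (hΩ : Ω ⊆ Ω') : stabOf Λ Ω' ≤ stabOf Λ Ω :=
  fun _ hγ => ⟨hγ.1, fun x hx => hγ.2 x (hΩ hx)⟩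

lemma stabOf_inf_stabOf (Ω Ω' : Set α) : stabOf Λ Ω ⊓ stabOf Λ Ω' = stabOf Λ (Ω ∪ Ω') := by
  ext γ
  simp only [Subgroup.mem_inf, mem_stabOf, Set.mem_union, or_imp, forall_and]
  tauto

lemma mem_stabOf_of_image_eq {n : ℕ} {rk : α → ℤ} (h : IsIncidenceComplex n rk)
    (hΛ : Λ ≤ orderAutGroup α) {τ : Equiv.Perm α} (hτ : τ ∈ Λ) {Φ Ψ Ω : Set α}
    (hΨ : IsMaxChain (· ≤ ·) Ψ) (himage : τ '' Φ = Ψ) (hΩ : Ω ⊆ Φ ∩ Ψ) : τ ∈ stabOf Λ Ω :=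
  ⟨hτ, fun _ hx => h.map_eq_self_of_image_eq (orderAutGroup.toOrderIso (hΛ hτ)) hΨ himage
    (hΩ hx).1 (hΩ hx).2⟩

end Stabilizers

section Distinguished

variable {n : ℕ} {Λ : Subgroup (Equiv.Perm α)} {F : Fin n → α} {I : Set ℤ}

lemma distinguishedSubgroup_eq_neg_one {i : ℤ} (hi : ∀ j : Fin n, (j : ℤ) ≠ i) :
    distinguishedSubgroup Λ F i = distinguishedSubgroup Λ F (-1) := by
  have hneg : ∀ j : Fin n, (j : ℤ) ≠ -1 := fun j => by omega
  simp only [distinguishedSubgroup, hi, hneg, ne_eq, not_false_eq_true, true_and]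

lemma distinguishedSubgroup_le_iSup {i : ℤ} (hi : i ∈ I ∨ ∀ j : Fin n, (j : ℤ) ≠ i) :
    distinguishedSubgroup Λ F i ≤ ⨆ k ∈ insert (-1 : ℤ) I, distinguishedSubgroup Λ F k := by
  rcases hi with hiI | hi
  · exact le_iSup₂_of_le i (Set.mem_insert_of_mem _ hiI) le_rfl
  · rw [distinguishedSubgroup_eq_neg_one hi]
    exact le_iSup₂_of_le (-1) (Set.mem_insert _ _) le_rfl

lemma iSup_distinguishedSubgroup_le_stabOf :
    ⨆ i ∈ insert (-1 : ℤ) I, distinguishedSubgroup Λ F i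
      ≤ stabOf Λ {x | ∃ j : Fin n, (j : ℤ) ∉ I ∧ x = F j} := by
  refine iSup₂_le fun i hi => stabOf_anti ?_
  rintro _ ⟨j, hjI, rfl⟩
  refine ⟨j, ?_, rfl⟩
  rintro rfl
  rcases hi with hi | hi
  · omega
  · exact hjI hi

end Distinguished

section IntersectionProperty

variable {n : ℕ} {rk : α → ℤ} {Λ : Subgroup (Equiv.Perm α)} {Φ : Set α} {F : Fin n → α}
  {I : Set ℤ}

lemma exists_mem_iSup_image_eq_of_adjacent (h : IsIncidenceComplex n rk)
    (hΛ : Λ ≤ orderAutGroup α) (htrans : FlagTransitive Λ) (hΦ : IsMaxChain (· ≤ ·) Φ)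
    (hF : ∀ i : Fin n, F i ∈ Φ ∧ rk (F i) = (i : ℤ)) {δ : Equiv.Perm α}
    (hδ : δ ∈ ⨆ i ∈ insert (-1 : ℤ) I, distinguishedSubgroup Λ F i) {Ψ : Set α}
    (hΨ : IsMaxChain (· ≤ ·) Ψ)
    (hfix : {x | ∃ j : Fin n, (j : ℤ) ∉ I ∧ x = F j} ⊆ δ '' Φ ∩ Ψ)
    {G : α} (hG : G ∈ δ '' Φ) (hGΨ : G ∉ Ψ) (hsub : δ '' Φ \ {G} ⊆ Ψ) :
    ∃ δ' ∈ ⨆ i ∈ insert (-1 : ℤ) I, distinguishedSubgroup Λ F i, δ' '' Φ = Ψ := by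
  have hδΛ : δ ∈ Λ := (iSup_distinguishedSubgroup_le_stabOf hδ).1
  have hδΦ : IsMaxChain (· ≤ ·) (δ '' Φ) := hΦ.image (orderAutGroup.toOrderIso (hΛ hδΛ))
  have hδΨ : IsMaxChain (· ≤ ·) (⇑(δ⁻¹) '' Ψ) :=
    hΨ.image (orderAutGroup.toOrderIso (hΛ (Λ.inv_mem hδΛ)))
  obtain ⟨τ, hτΛ, hτΦ⟩ := htrans Φ _ hΦ hδΨ
  have hτ : τ ∈ distinguishedSubgroup Λ F (rk G) := by
    refine mem_stabOf_of_image_eq h hΛ hτΛ hδΨ hτΦ ?_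
    rintro _ ⟨m, hm, rfl⟩
    have hδFm : δ (F m) ≠ G := by
      intro hδG
      apply hm
      rw [← hδG, ← (hF m).2]
      exact (h.rk_map (orderAutGroup.toOrderIso (hΛ hδΛ)) (F m)).symm
    refine ⟨(hF m).1, δ (F m), hsub ⟨Set.mem_image_of_mem δ (hF m).1, hδFm⟩, ?_⟩
    simp
  have hrkG : rk G ∈ I ∨ ∀ j : Fin n, (j : ℤ) ≠ rk G := by
    by_contra! hcon
    obtain ⟨hGI, j, hj⟩ := hcon
    have hFj := hfix ⟨j, hj ▸ hGI, rfl⟩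
    have hGFj : G = F j := h.injOn_rk hδΦ.1 hG hFj.1 (by rw [(hF j).2, hj])
    exact hGΨ (hGFj ▸ hFj.2)
  refine ⟨δ * τ, Subgroup.mul_mem _ hδ (distinguishedSubgroup_le_iSup hrkG hτ), ?_⟩
  rw [Equiv.Perm.coe_mul, Set.image_comp, hτΦ, Set.image_image]
  simp

lemma exists_mem_iSup_image_eq_of_reflTransGen (h : IsIncidenceComplex n rk)
    (hΛ : Λ ≤ orderAutGroup α) (htrans : FlagTransitive Λ) (hΦ : IsMaxChain (· ≤ ·) Φ)
    (hF : ∀ i : Fin n, F i ∈ Φ ∧ rk (F i) = (i : ℤ)) {Ω Ψ : Set α}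
    (hΩ : {x | ∃ j : Fin n, (j : ℤ) ∉ I ∧ x = F j} ⊆ Ω)
    (hconn : Relation.ReflTransGen
      (fun A B => IsMaxChain (· ≤ ·) A ∧ IsMaxChain (· ≤ ·) B ∧ Ω ⊆ A ∧ Ω ⊆ B ∧
        ∃ G G', G ∈ A ∧ G' ∈ B ∧ G ≠ G' ∧ A \ {G} = B \ {G'}) Φ Ψ) :
    ∃ δ ∈ ⨆ i ∈ insert (-1 : ℤ) I, distinguishedSubgroup Λ F i, δ '' Φ = Ψ := by
  induction hconn with
  | refl => exact ⟨1, Subgroup.one_mem _, Set.image_id Φ⟩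
  | @tail _ Ψ _ hstep ih =>
    obtain ⟨δ, hδ, rfl⟩ := ih
    obtain ⟨-, hΨ, hδΦ, hΨΩ, G, G', hG, -, hGG', hdiff⟩ := hstep
    refine exists_mem_iSup_image_eq_of_adjacent h hΛ htrans hΦ hF hδ hΨ
      (Set.subset_inter (hΩ.trans hδΦ) (hΩ.trans hΨΩ)) hG ?_ (hdiff ▸ Set.sdiff_subset)
    intro hGΨ
    have hG' : G ∈ Ψ \ {G'} := ⟨hGΨ, hGG'⟩
    rw [← hdiff] at hG'
    exact hG'.2 rfl

lemma stabOf_le_iSup_distinguishedSubgroup (h : IsIncidenceComplex n rk)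
    (hΛ : Λ ≤ orderAutGroup α) (htrans : FlagTransitive Λ) (hΦ : IsMaxChain (· ≤ ·) Φ)
    (hF : ∀ i : Fin n, F i ∈ Φ ∧ rk (F i) = (i : ℤ)) :
    stabOf Λ {x | ∃ j : Fin n, (j : ℤ) ∉ I ∧ x = F j}
      ≤ ⨆ i ∈ insert (-1 : ℤ) I, distinguishedSubgroup Λ F i := by
  intro γ hγ
  have hγΦ : IsMaxChain (· ≤ ·) (γ '' Φ) := hΦ.image (orderAutGroup.toOrderIso (hΛ hγ.1))
  have hfix : {x | ∃ j : Fin n, (j : ℤ) ∉ I ∧ x = F j} ⊆ Φ ∩ γ '' Φ := by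
    rintro _ ⟨j, hj, rfl⟩
    exact ⟨(hF j).1, F j, (hF j).1, hγ.2 _ ⟨j, hj, rfl⟩⟩
  obtain ⟨δ, hδ, hδΦ⟩ := exists_mem_iSup_image_eq_of_reflTransGen h hΛ htrans hΦ hF hfix
    (h.strongly_connected Φ (γ '' Φ) hΦ hγΦ)
  have hδΛ : δ ∈ Λ := (iSup_distinguishedSubgroup_le_stabOf hδ).1
  have hflag : δ⁻¹ * γ ∈ distinguishedSubgroup Λ F (-1) := by
    refine mem_stabOf_of_image_eq h hΛ (Λ.mul_mem (Λ.inv_mem hδΛ) hγ.1) hΦ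
      (Φ := Φ) ?_ ?_
    · rw [Equiv.Perm.coe_mul, Set.image_comp, ← hδΦ, Set.image_image]
      simp
    · rintro _ ⟨j, -, rfl⟩
      exact ⟨(hF j).1, (hF j).1⟩
  simpa using Subgroup.mul_mem _ hδ
    (distinguishedSubgroup_le_iSup (Or.inr fun j => by omega) hflag)

lemma iSup_distinguishedSubgroup_eq_stabOf (h : IsIncidenceComplex n rk)
    (hΛ : Λ ≤ orderAutGroup α) (htrans : FlagTransitive Λ) (hΦ : IsMaxChain (· ≤ ·) Φ)
    (hF : ∀ i : Fin n, F i ∈ Φ ∧ rk (F i) = (i : ℤ)) :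
    ⨆ i ∈ insert (-1 : ℤ) I, distinguishedSubgroup Λ F i
      = stabOf Λ {x | ∃ j : Fin n, (j : ℤ) ∉ I ∧ x = F j} :=
  iSup_distinguishedSubgroup_le_stabOf.antisymm
    (stabOf_le_iSup_distinguishedSubgroup h hΛ htrans hΦ hF)

end IntersectionProperty

theorem distinguished_intersection_property_general
    {α : Type u} [PartialOrder α] {n : ℕ} (rk : α → ℤ)
    (h : IsIncidenceComplex n rk)
    (Λ : Subgroup (Equiv.Perm α)) (hΛ : Λ ≤ orderAutGroup α)
    (htrans : FlagTransitive Λ)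
    (Φ : Set α) (hΦ : IsMaxChain (· ≤ ·) Φ)
    (F : Fin n → α) (hF : ∀ i : Fin n, F i ∈ Φ ∧ rk (F i) = (i : ℤ))
    (I J : Set ℤ) :
    (⨆ i ∈ insert (-1 : ℤ) I, distinguishedSubgroup Λ F i)
        ⊓ (⨆ i ∈ insert (-1 : ℤ) J, distinguishedSubgroup Λ F i)
      = ⨆ i ∈ insert (-1 : ℤ) (I ∩ J), distinguishedSubgroup Λ F i := by
  simp only [iSup_distinguishedSubgroup_eq_stabOf h hΛ htrans hΦ hF, stabOf_inf_stabOf]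
  congr 1
  ext x
  simp only [Set.mem_union, Set.mem_ofPred_eq, Set.mem_inter_iff, not_and_or, or_and_right,
    exists_or]

/-- The intersection property for the distinguished subgroups of a
flag-transitive group of automorphisms of a regular incidence complex: for subsets
`I, J ⊆ {-1, 0, …, n}`, `⟨R i : i ∈ I⟩ ∩ ⟨R i : i ∈ J⟩ = ⟨R i : i ∈ I ∩ J⟩`, where the
subgroup generated by an empty index set is by convention the flag stabilizer
`R (-1) = Λ_Φ` (which is contained in every `R i`; accordingly the index `-1` is adjoined
throughout). -/
theorem distinguished_intersection_property
    {α : Type u} [PartialOrder α] {n : ℕ} (rk : α → ℤ)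
    (h : IsIncidenceComplex n rk)
    (Λ : Subgroup (Equiv.Perm α)) (hΛ : Λ ≤ orderAutGroup α)
    (htrans : FlagTransitive Λ)
    (Φ : Set α) (hΦ : IsMaxChain (· ≤ ·) Φ)
    (F : Fin n → α) (hF : ∀ i : Fin n, F i ∈ Φ ∧ rk (F i) = (i : ℤ))
    (I J : Set ℤ) (hI : I ⊆ Set.Icc (-1 : ℤ) n) (hJ : J ⊆ Set.Icc (-1 : ℤ) n) :
    (⨆ i ∈ insert (-1 : ℤ) I, distinguishedSubgroup Λ F i)
        ⊓ (⨆ i ∈ insert (-1 : ℤ) J, distinguishedSubgroup Λ F i)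
      = ⨆ i ∈ insert (-1 : ℤ) (I ∩ J), distinguishedSubgroup Λ F i :=
  distinguished_intersection_property_general rk h Λ hΛ htrans Φ hΦ F hF I J
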